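/- arXiv:1305.2436 — 2 statements merged into one kernel-verified Lean document; each statement's English description precedes it below -/
import Mathlib

section
/- Let ρ_λ : ℝ → ℝ satisfy Assumption 1 with parameters λ > 0, L > 0, μ ≥ 0. Then for every p ≥ 1 and every β ∈ ℝ^p, λL‖β‖₁ ≤ ∑_{j=1}^p ρ_λ(β_j) + (μ/2)‖β‖₂². -/
open Finset

noncomputable def l1 {p : ℕ} (x : Fin p → ℝ) : ℝ := ∑ i, |x i|

noncomputable def l2 {p : ℕ} (x : Fin p → ℝ) : ℝ := Real.sqrt (∑ i, (x i) ^ 2)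

noncomputable def rhoVec {p : ℕ} (ρ : ℝ → ℝ) (x : Fin p → ℝ) : ℝ := ∑ i, ρ (x i)

/-- Assumption 1 on the regularizer `ρ_λ` with parameters `λ, L, μ`. -/
structure Assumption1 (ρ : ℝ → ℝ) (lam L mu : ℝ) : Prop where
  zero : ρ 0 = 0
  even : ∀ t : ℝ, ρ (-t) = ρ t
  mono : ∀ s t : ℝ, 0 ≤ s → s ≤ t → ρ s ≤ ρ t
  slope : ∀ s t : ℝ, 0 < s → s ≤ t → ρ t / t ≤ ρ s / s
  diff : ∀ t : ℝ, t ≠ 0 → DifferentiableAt ℝ ρ t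
  deriv_lim : Filter.Tendsto (deriv ρ) (nhdsWithin 0 (Set.Ioi 0)) (nhds (lam * L))
  conv : ConvexOn ℝ Set.univ (fun t => ρ t + (mu / 2) * t ^ 2)

/-!
The function `g t = ρ t + (μ/2) t²` is convex with `g 0 = 0` and right derivative `λL` at `0`,
so it lies above its tangent line `t ↦ λL t` at the origin; by evenness of `ρ` this gives
`λL |t| ≤ ρ t + (μ/2) t²` for every real `t`, and summing over the coordinates of `β` gives the
claim.
-/

open Filter Set Topology

theorem ConvexOn.add_mul_sub_le_of_tendsto_deriv {S : Set ℝ} {g : ℝ → ℝ} {a t c : ℝ}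
    (hg : ConvexOn ℝ S g) (ha : a ∈ S) (ht : t ∈ S) (hat : a ≤ t)
    (hcont : ContinuousWithinAt g (Ioi a) a)
    (hdiff : ∀ᶠ s in 𝓝[>] a, DifferentiableAt ℝ g s)
    (hlim : Tendsto (deriv g) (𝓝[>] a) (𝓝 c)) :
    g a + c * (t - a) ≤ g t := by
  rcases hat.eq_or_lt with rfl | hat
  · simp
  have htangent : ∀ᶠ s in 𝓝[>] a, g s + deriv g s * (t - s) ≤ g t := by
    filter_upwards [hdiff, Ioo_mem_nhdsGT hat] with s hds ⟨has, hst⟩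
    have hs : s ∈ S := hg.1.ordConnected.out ha ht ⟨has.le, hst.le⟩
    have := hg.deriv_le_slope hs ht hst hds
    rw [slope_def_field, le_div_iff₀ (sub_pos.2 hst)] at this
    linarith
  refine le_of_tendsto ?_ htangent
  exact hcont.tendsto.add (hlim.mul ((tendsto_const_nhds.sub tendsto_id).mono_left
    nhdsWithin_le_nhds))

namespace Assumption1

variable {ρ : ℝ → ℝ} {lam L mu : ℝ}

theorem apply_abs (hA : Assumption1 ρ lam L mu) (t : ℝ) : ρ |t| = ρ t := by
  rcases abs_choice t with h | h <;> rw [h]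
  exact hA.even t

theorem tendsto_deriv_add_sq (hA : Assumption1 ρ lam L mu) :
    Tendsto (deriv fun t => ρ t + (mu / 2) * t ^ 2) (𝓝[>] 0) (𝓝 (lam * L)) := by
  have hderiv : ∀ s ≠ 0, deriv (fun t => ρ t + (mu / 2) * t ^ 2) s = deriv ρ s + mu * s := by
    intro s hs
    have := (hA.diff s hs).hasDerivAt.fun_add ((hasDerivAt_pow 2 s).const_mul (mu / 2))
    rw [this.deriv]
    ring
  have hlin : Tendsto (fun s : ℝ => mu * s) (𝓝[>] 0) (𝓝 0) :=
    tendsto_nhdsWithin_of_tendsto_nhds ((continuous_const_mul mu).tendsto' 0 0 (mul_zero mu))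
  refine (by simpa using hA.deriv_lim.add hlin : Tendsto _ _ (𝓝 (lam * L))).congr' ?_
  filter_upwards [self_mem_nhdsWithin] with s hs
  exact (hderiv s (ne_of_gt hs)).symm

theorem mul_abs_le_add_sq (hA : Assumption1 ρ lam L mu) (t : ℝ) :
    lam * L * |t| ≤ ρ t + (mu / 2) * t ^ 2 := by
  have hcont : Continuous fun t => ρ t + (mu / 2) * t ^ 2 :=
    continuousOn_univ.1 (hA.conv.continuousOn isOpen_univ)
  have hdiff : ∀ᶠ s in 𝓝[>] (0 : ℝ), DifferentiableAt ℝ (fun t => ρ t + (mu / 2) * t ^ 2) s := by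
    filter_upwards [self_mem_nhdsWithin] with s hs
    exact (hA.diff s (ne_of_gt hs)).add (by fun_prop)
  have := hA.conv.add_mul_sub_le_of_tendsto_deriv (mem_univ 0) (mem_univ |t|) (abs_nonneg t)
    hcont.continuousWithinAt hdiff hA.tendsto_deriv_add_sq
  simpa [hA.zero, hA.apply_abs] using this

end Assumption1

theorem l2_sq {p : ℕ} (x : Fin p → ℝ) : l2 x ^ 2 = ∑ i, x i ^ 2 :=
  Real.sq_sqrt (sum_nonneg fun _ _ => sq_nonneg _)

theorem l1_lower_bound_by_regularizer_general
    (ρ : ℝ → ℝ) (lam L mu : ℝ)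
    (hA1 : Assumption1 ρ lam L mu) :
    ∀ p : ℕ, 1 ≤ p → ∀ β : Fin p → ℝ,
      lam * L * l1 β ≤ rhoVec ρ β + (mu / 2) * (l2 β) ^ 2 := by
  intro p _ β
  rw [l2_sq, l1, rhoVec, mul_sum, mul_sum, ← sum_add_distrib]
  exact sum_le_sum fun i _ => hA1.mul_abs_le_add_sq (β i)

theorem l1_lower_bound_by_regularizer
    (ρ : ℝ → ℝ) (lam L mu : ℝ) (hlam : 0 < lam) (hL : 0 < L) (hmu : 0 ≤ mu)
    (hA1 : Assumption1 ρ lam L mu) :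
    ∀ p : ℕ, 1 ≤ p → ∀ β : Fin p → ℝ,
      lam * L * l1 β ≤ rhoVec ρ β + (mu / 2) * (l2 β) ^ 2 :=
  l1_lower_bound_by_regularizer_general ρ lam L mu hA1
end

section
/- Let p ≥ 2 and n ≥ 1 be integers, R > 0, α₁ > 0, τ₁ ≥ 0, β* ∈ ℝ^p, and let L_n : ℝ^p → ℝ be convex and differentiable. Suppose ⟨∇L_n(β* + Δ) − ∇L_n(β*), Δ⟩ ≥ α₁‖Δ‖₂² − τ₁((log p)/n)‖Δ‖₁² for all Δ ∈ ℝ^p with ‖Δ‖₂ ≤ 1 and ‖Δ‖₁ ≤ 2R, and suppose n ≥ 4R²τ₁² log p. Then for all Δ ∈ ℝ^p with ‖Δ‖₂ ≥ 1 and ‖Δ‖₁ ≤ 2R, ⟨∇L_n(β* + Δ) − ∇L_n(β*), Δ⟩ ≥ α₁‖Δ‖₂ − √((log p)/n)·‖Δ‖₁. -/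
/-
Restrict `Ln` to the ray `s ↦ bstar + s • Δ`: by convexity its derivative
`φ s = ⟨∇Ln (bstar + s • Δ) - ∇Ln bstar, Δ⟩` is monotone in `s`. Applying the local inequality to the
unit vector `Δ / ‖Δ‖₂` gives `φ (1 / ‖Δ‖₂) ≥ α₁ ‖Δ‖₂ - τ₁ (log p / n) ‖Δ‖₁² / ‖Δ‖₂`, and monotonicity
passes this to `φ 1`. The sample-size condition says `τ₁ √(log p / n) ‖Δ‖₁ ≤ 1`, which turns the
quadratic penalty into the linear one.
-/

open Finset

noncomputable def dot {p : ℕ} (x y : Fin p → ℝ) : ℝ := ∑ i, x i * y i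

theorem ConvexOn.monotone_fderiv_apply_add_smul {E : Type*} [NormedAddCommGroup E]
    [NormedSpace ℝ E] {f : E → ℝ} {f' : E → E →L[ℝ] ℝ} (hf : ConvexOn ℝ Set.univ f)
    (hf' : ∀ x, HasFDerivAt f (f' x) x) (x v : E) :
    Monotone fun s : ℝ => f' (x + s • v) v := by
  have hline : ∀ s : ℝ, HasDerivAt (fun s : ℝ => f (x + s • v)) (f' (x + s • v) v) s :=
    fun s => (hf' _).comp_hasDerivAt s (((hasDerivAt_id s).smul_const v).const_add x |>.congr_deriv
      (one_smul ℝ v))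
  have hconv : ConvexOn ℝ Set.univ fun s : ℝ => f (x + s • v) := by
    simpa [Function.comp_def, AffineMap.lineMap_apply, add_comm] using
      hf.comp_affineMap (AffineMap.lineMap x (x + v))
  intro a b hab
  simpa only [(hline a).deriv, (hline b).deriv] using
    hconv.monotoneOn_deriv (fun s _ => (hline s).differentiableAt) trivial trivial hab

theorem sum_smul_proj_apply {p : ℕ} (g x : Fin p → ℝ) :
    (∑ i, g i • (ContinuousLinearMap.proj i : (Fin p → ℝ) →L[ℝ] ℝ)) x = dot g x := by
  simp [dot]

theorem l1_smul {p : ℕ} (c : ℝ) (x : Fin p → ℝ) : l1 (c • x) = |c| * l1 x := by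
  simp [l1, abs_mul, Finset.mul_sum]

theorem l2_smul {p : ℕ} (c : ℝ) (x : Fin p → ℝ) : l2 (c • x) = |c| * l2 x := by
  simp only [l2, Pi.smul_apply, smul_eq_mul, mul_pow, ← Finset.mul_sum]
  rw [Real.sqrt_mul (sq_nonneg c), Real.sqrt_sq_eq_abs]

theorem l1_nonneg {p : ℕ} (x : Fin p → ℝ) : 0 ≤ l1 x :=
  Finset.sum_nonneg fun _ _ => abs_nonneg _

theorem dot_sub_left {p : ℕ} (x y z : Fin p → ℝ) : dot (x - y) z = dot x z - dot y z := by
  simp [dot, sub_mul, Finset.sum_sub_distrib]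

theorem dot_smul_right {p : ℕ} (c : ℝ) (x y : Fin p → ℝ) : dot x (c • y) = c * dot x y := by
  simp only [dot, Pi.smul_apply, smul_eq_mul, Finset.mul_sum]
  exact Finset.sum_congr rfl fun i _ => by ring

theorem mul_sub_sq_div_le_of_sub_le_inv_mul {a c l s φ : ℝ} (hs : 0 < s)
    (h : a - c * (s⁻¹ * l) ^ 2 ≤ s⁻¹ * φ) : a * s - c * l ^ 2 / s ≤ φ := by
  have := mul_le_mul_of_nonneg_left h hs.le
  field_simp at this ⊢
  linarith

theorem mul_sq_div_le_sqrt_mul {q t l r s : ℝ} (hq : 0 ≤ q) (ht : 0 ≤ t) (hs : 1 ≤ s)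
    (hl : 0 ≤ l) (hlr : l ≤ r) (hr : t ^ 2 * q * r ^ 2 ≤ 1) :
    t * q * l ^ 2 / s ≤ Real.sqrt q * l := by
  have hprod : t * Real.sqrt q * l ≤ 1 := by
    refine (abs_le_of_sq_le_sq' ?_ zero_le_one).2
    calc (t * Real.sqrt q * l) ^ 2 = t ^ 2 * q * l ^ 2 := by
          rw [mul_pow, mul_pow, Real.sq_sqrt hq]
      _ ≤ t ^ 2 * q * r ^ 2 := by gcongr
      _ ≤ 1 ^ 2 := by rwa [one_pow]
  calc t * q * l ^ 2 / s ≤ t * q * l ^ 2 := div_le_self (by positivity) hs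
    _ = (t * Real.sqrt q * l) * (Real.sqrt q * l) := by
          linear_combination (-(t * l ^ 2)) * Real.mul_self_sqrt hq
    _ ≤ Real.sqrt q * l := mul_le_of_le_one_left (by positivity) hprod

theorem local_rsc_implies_global_rsc_of_convex_general
    {p n : ℕ}
    (R a1 t1 : ℝ) (ht1 : 0 ≤ t1)
    (bstar : Fin p → ℝ)
    (Ln : (Fin p → ℝ) → ℝ) (gradLn : (Fin p → ℝ) → (Fin p → ℝ))
    (hdiff : ∀ β : Fin p → ℝ, HasFDerivAt Ln
      (∑ i, gradLn β i • (ContinuousLinearMap.proj i : (Fin p → ℝ) →L[ℝ] ℝ)) β)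
    (hconv : ConvexOn ℝ Set.univ Ln)
    (hlocal : ∀ Δ : Fin p → ℝ, l2 Δ ≤ 1 → l1 Δ ≤ 2 * R →
      dot (gradLn (bstar + Δ) - gradLn bstar) Δ ≥
        a1 * (l2 Δ) ^ 2 - t1 * (Real.log p / n) * (l1 Δ) ^ 2)
    (hsample : 4 * R ^ 2 * t1 ^ 2 * Real.log p ≤ n) :
    ∀ Δ : Fin p → ℝ, 1 ≤ l2 Δ → l1 Δ ≤ 2 * R →
      dot (gradLn (bstar + Δ) - gradLn bstar) Δ ≥
        a1 * l2 Δ - Real.sqrt (Real.log p / n) * l1 Δ := by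
  intro Δ h2 h1
  set q := Real.log p / n
  set s := l2 Δ
  have hs : 0 < s := zero_lt_one.trans_le h2
  set φ : ℝ → ℝ := fun u => dot (gradLn (bstar + u • Δ) - gradLn bstar) Δ
  have hφ : Monotone φ := by
    intro u v huv
    have := hconv.monotone_fderiv_apply_add_smul hdiff bstar Δ huv
    simp only [sum_smul_proj_apply] at this
    simpa only [φ, dot_sub_left, sub_le_sub_iff_right] using this
  have hunit : l2 (s⁻¹ • Δ) = 1 := by
    rw [l2_smul, abs_of_pos (inv_pos.2 hs), inv_mul_cancel₀ hs.ne']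
  have hl1 : l1 (s⁻¹ • Δ) = s⁻¹ * l1 Δ := by rw [l1_smul, abs_of_pos (inv_pos.2 hs)]
  have hloc := hlocal (s⁻¹ • Δ) hunit.le
    (hl1 ▸ mul_le_of_le_one_left (l1_nonneg Δ) (inv_le_one_of_one_le₀ h2) |>.trans h1)
  rw [hunit, hl1, dot_smul_right, one_pow, mul_one] at hloc
  have hsample' : t1 ^ 2 * q * (2 * R) ^ 2 ≤ 1 := by
    rw [show t1 ^ 2 * q * (2 * R) ^ 2 = 4 * R ^ 2 * t1 ^ 2 * Real.log p / n by ring]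
    exact div_le_one_of_le₀ hsample n.cast_nonneg
  calc a1 * s - Real.sqrt q * l1 Δ ≤ a1 * s - t1 * q * l1 Δ ^ 2 / s := by
        gcongr
        exact mul_sq_div_le_sqrt_mul (div_nonneg (Real.log_natCast_nonneg p) n.cast_nonneg) ht1
          h2 (l1_nonneg Δ) h1 hsample'
    _ ≤ φ s⁻¹ := mul_sub_sq_div_le_of_sub_le_inv_mul hs hloc
    _ ≤ φ 1 := hφ (inv_le_one_of_one_le₀ h2)
    _ = _ := by simp only [φ, one_smul]

theorem local_rsc_implies_global_rsc_of_convex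
    {p n : ℕ} (hp : 2 ≤ p) (hn : 1 ≤ n)
    (R a1 t1 : ℝ) (hR : 0 < R) (ha1 : 0 < a1) (ht1 : 0 ≤ t1)
    (bstar : Fin p → ℝ)
    (Ln : (Fin p → ℝ) → ℝ) (gradLn : (Fin p → ℝ) → (Fin p → ℝ))
    (hdiff : ∀ β : Fin p → ℝ, HasFDerivAt Ln
      (∑ i, gradLn β i • (ContinuousLinearMap.proj i : (Fin p → ℝ) →L[ℝ] ℝ)) β)
    (hconv : ConvexOn ℝ Set.univ Ln)
    (hlocal : ∀ Δ : Fin p → ℝ, l2 Δ ≤ 1 → l1 Δ ≤ 2 * R →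
      dot (gradLn (bstar + Δ) - gradLn bstar) Δ ≥
        a1 * (l2 Δ) ^ 2 - t1 * (Real.log p / n) * (l1 Δ) ^ 2)
    (hsample : 4 * R ^ 2 * t1 ^ 2 * Real.log p ≤ n) :
    ∀ Δ : Fin p → ℝ, 1 ≤ l2 Δ → l1 Δ ≤ 2 * R →
      dot (gradLn (bstar + Δ) - gradLn bstar) Δ ≥
        a1 * l2 Δ - Real.sqrt (Real.log p / n) * l1 Δ :=
  local_rsc_implies_global_rsc_of_convex_general R a1 t1 ht1 bstar Ln gradLn hdiff hconv hlocal
    hsample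
end
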